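/- Fix an integer d ≥ 1 and Λ > Λ' > 0. Let S, T : (ℤ^d → ℝ) → ℝ be measurable, square-integrable with respect to μ_Λ, and nonnegative μ_Λ-almost everywhere. Then ∫ (exp(−I_{Λ,Λ'}(S)(ψ)) − exp(−I_{Λ,Λ'}(T)(ψ)))² dμ_{Λ'}(ψ) ≤ ∫ (S(χ) − T(χ))² dμ_Λ(χ), where I_{Λ,Λ'}(S)(ψ) = −log ∫ exp(−S(φ + ψ)) dμ_{Λ,Λ'}(φ). -/

import Mathlib

open MeasureTheory ProbabilityTheory

/-- The Euclidean norm of a lattice point `n : Fin d → ℤ`. -/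
noncomputable def latticeNorm {d : ℕ} (n : Fin d → ℤ) : ℝ :=
  Real.sqrt (∑ i, ((n i : ℝ)) ^ 2)

/-- The variance `v_Λ(n) = exp(−‖n‖²/Λ)/(2(‖n‖²+1))` of the Gaussian factor at `n`. -/
noncomputable def varCutoff {d : ℕ} (Λ : ℝ) (n : Fin d → ℤ) : NNReal :=
  (Real.exp (-(latticeNorm n ^ 2) / Λ) / (2 * (latticeNorm n ^ 2 + 1))).toNNReal

/-- The variance `v_{Λ,Λ'}(n) = (exp(−‖n‖²/Λ) − exp(−‖n‖²/Λ'))/(2(‖n‖²+1))`. -/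
noncomputable def varCutoffDiff {d : ℕ} (Λ Λ' : ℝ) (n : Fin d → ℤ) : NNReal :=
  ((Real.exp (-(latticeNorm n ^ 2) / Λ) - Real.exp (-(latticeNorm n ^ 2) / Λ')) /
    (2 * (latticeNorm n ^ 2 + 1))).toNNReal

/-- `μ` is the product over `n : Fin d → ℤ` of the centered Gaussian measures on `ℝ` with
variances `v n`, characterized through its values on all measurable cylinder sets. -/
def IsProductGaussian {d : ℕ} (μ : Measure ((Fin d → ℤ) → ℝ))
    (v : (Fin d → ℤ) → NNReal) : Prop :=
  ∀ (F : Finset (Fin d → ℤ)) (B : (Fin d → ℤ) → Set ℝ), (∀ n, MeasurableSet (B n)) →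
    μ {a | ∀ n ∈ F, a n ∈ B n} = ∏ n ∈ F, gaussianReal 0 (v n) (B n)

/-- The integration-out map of the renormalization group:
`I(S)(ψ) = −log ∫ exp(−S(φ+ψ)) dμ(φ)`, where `μ` is the fluctuation measure. -/
noncomputable def integrateOut {d : ℕ} (μ : Measure ((Fin d → ℤ) → ℝ))
    (S : ((Fin d → ℤ) → ℝ) → ℝ) (ψ : (Fin d → ℤ) → ℝ) : ℝ :=
  -Real.log (∫ φ, Real.exp (-S (φ + ψ)) ∂μ)

/-!
The fluctuation measures compose: `μ_Λ = μ_{Λ'} ∗ μ_{Λ,Λ'}`, since both sides are products of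
centred Gaussians and the variances add coordinatewise. Because `S, T ≥ 0` almost everywhere,
`exp (-I(S)(ψ)) = ∫ exp (-S (ψ + φ)) dμ_{Λ,Λ'}(φ)` for `μ_{Λ'}`-almost every `ψ`, so the
integrand on the left is the square of a fibre average of `u = exp (-S) - exp (-T)`. Jensen's
inequality on each fibre and Fubini bound the left side by `∫ u² dμ_Λ`, and `x ↦ exp (-x)` is
`1`-Lipschitz on `[0, ∞)`, so `u² ≤ (S - T)²`.
-/

theorem Real.abs_exp_neg_sub_exp_neg_le {s t : ℝ} (hs : 0 ≤ s) (ht : 0 ≤ t) :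
    |Real.exp (-s) - Real.exp (-t)| ≤ |s - t| := by
  wlog hst : s ≤ t generalizing s t
  · rw [abs_sub_comm, abs_sub_comm s]
    exact this ht hs (le_of_not_ge hst)
  rw [abs_of_nonneg (sub_nonneg.2 (Real.exp_le_exp.2 (neg_le_neg hst))),
    abs_of_nonpos (sub_nonpos.2 hst)]
  calc Real.exp (-s) - Real.exp (-t) = Real.exp (-s) * (1 - Real.exp (-(t - s))) := by
        rw [mul_sub, mul_one, ← Real.exp_add]; ring_nf
    _ ≤ 1 * (1 - Real.exp (-(t - s))) :=
        mul_le_mul_of_nonneg_right (Real.exp_le_one_iff.2 (by linarith))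
          (sub_nonneg.2 (Real.exp_le_one_iff.2 (by linarith)))
    _ ≤ -(s - t) := by linarith [Real.one_sub_le_exp_neg (t - s)]

namespace MeasureTheory.Measure

variable {ι X : Type*} [MeasurableSpace X] {μ ν : ι → Measure X}
  [∀ i, IsProbabilityMeasure (μ i)] [∀ i, IsProbabilityMeasure (ν i)]

theorem lintegral_infinitePi_finset_prod (s : Finset ι) {f : ι → X → ENNReal}
    (hf : ∀ i, Measurable (f i)) :
    ∫⁻ x, ∏ i ∈ s, f i (x i) ∂infinitePi μ = ∏ i ∈ s, ∫⁻ a, f i a ∂μ i := by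
  rw [lintegral_prod_eq_prod_lintegral_of_indepFun s _ (iIndepFun_infinitePi hf)
    fun i => (hf i).comp (measurable_pi_apply i)]
  exact Finset.prod_congr rfl fun i _ =>
    (measurePreserving_eval_infinitePi μ i).lintegral_comp (hf i)

theorem infinitePi_conv_infinitePi [AddMonoid X] [MeasurableAdd₂ X] :
    infinitePi μ ∗ infinitePi ν = infinitePi fun i => μ i ∗ ν i := by
  refine eq_infinitePi _ fun s t ht => ?_
  have hind (i) : Measurable ((t i).indicator (1 : X → ENNReal)) :=
    measurable_one.indicator (ht i)
  have hpi : MeasurableSet ((s : Set ι).pi t) := .pi s.countable_toSet fun i _ => ht i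
  rw [← lintegral_indicator_one hpi, lintegral_conv (measurable_one.indicator hpi)]
  simp_rw [Set.indicator_pi_one_apply, Pi.add_apply]
  have hinner (x : ι → X) : ∫⁻ y, ∏ i ∈ s, (t i).indicator 1 (x i + y i) ∂infinitePi ν =
      ∏ i ∈ s, ∫⁻ b, (t i).indicator 1 (x i + b) ∂ν i :=
    lintegral_infinitePi_finset_prod s fun i => (hind i).comp (measurable_const_add _)
  simp_rw [hinner]
  rw [lintegral_infinitePi_finset_prod (f := fun i a => ∫⁻ b, (t i).indicator 1 (a + b) ∂ν i) s
    fun i => ((hind i).comp measurable_add).lintegral_prod_right']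
  refine Finset.prod_congr rfl fun i _ => ?_
  rw [← lintegral_indicator_one (ht i), lintegral_conv (hind i)]

end MeasureTheory.Measure

namespace MeasureTheory

section

variable {Ω : Type*} [MeasurableSpace Ω] {P : Measure Ω}

theorem sq_integral_le_integral_sq [IsProbabilityMeasure P] {f : Ω → ℝ} (hf : MemLp f 2 P) :
    (∫ ω, f ω ∂P) ^ 2 ≤ ∫ ω, f ω ^ 2 ∂P := by
  have h := variance_nonneg f P
  rw [variance_eq_sub hf, sub_nonneg] at h
  simpa using h

theorem integrable_exp_neg_of_ae_nonneg [IsFiniteMeasure P] {f : Ω → ℝ}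
    (hf : AEStronglyMeasurable f P) (h0 : ∀ᵐ ω ∂P, 0 ≤ f ω) :
    Integrable (fun ω => Real.exp (-f ω)) P := by
  refine .of_bound (Real.continuous_exp.comp_aestronglyMeasurable hf.neg) 1 ?_
  filter_upwards [h0] with ω hω
  rw [Real.norm_of_nonneg (Real.exp_pos _).le]
  exact Real.exp_le_one_iff.2 (neg_nonpos.2 hω)

end

section Convolution

variable {M : Type*} [AddMonoid M] [MeasurableSpace M] [MeasurableAdd₂ M] {μ ν : Measure M}

theorem ae_ae_add_of_ae_conv [SFinite ν] {p : M → Prop} (h : ∀ᵐ z ∂(μ ∗ ν), p z) :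
    ∀ᵐ x ∂μ, ∀ᵐ y ∂ν, p (x + y) :=
  Measure.ae_ae_of_ae_prod (ae_of_ae_map measurable_add.aemeasurable h)

theorem integral_sq_integral_add_le [SFinite μ] [IsProbabilityMeasure ν] {u : M → ℝ}
    (hu : MemLp u 2 (μ ∗ ν)) :
    ∫ x, (∫ y, u (x + y) ∂ν) ^ 2 ∂μ ≤ ∫ z, u z ^ 2 ∂(μ ∗ ν) := by
  have hu2 := hu.integrable_sq
  obtain ⟨hsection, hfiber⟩ := (integrable_conv_iff hu2.1).1 hu2
  have hmeas : ∀ᵐ x ∂μ, AEStronglyMeasurable (fun y => u (x + y)) ν :=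
    (hu.1.comp_measurable measurable_add).prodMk_left
  rw [integral_conv hu2]
  refine integral_mono_of_nonneg (ae_of_all _ fun x => sq_nonneg _) (by simpa using hfiber) ?_
  filter_upwards [hsection, hmeas] with x hx hxm
  exact sq_integral_le_integral_sq ((memLp_two_iff_integrable_sq hxm).2 hx)

end Convolution

end MeasureTheory

theorem IsProductGaussian.eq_infinitePi {d : ℕ} {μ : Measure ((Fin d → ℤ) → ℝ)}
    {v : (Fin d → ℤ) → NNReal} (h : IsProductGaussian μ v) :
    μ = Measure.infinitePi fun n => gaussianReal 0 (v n) :=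
  Measure.eq_infinitePi _ fun s t ht => h s t ht

theorem IsProductGaussian.isProbabilityMeasure {d : ℕ} {μ : Measure ((Fin d → ℤ) → ℝ)}
    {v : (Fin d → ℤ) → NNReal} (h : IsProductGaussian μ v) : IsProbabilityMeasure μ :=
  h.eq_infinitePi ▸ inferInstance

theorem IsProductGaussian.conv_eq_infinitePi {d : ℕ} {μ ν : Measure ((Fin d → ℤ) → ℝ)}
    {v w : (Fin d → ℤ) → NNReal} (hμ : IsProductGaussian μ v) (hν : IsProductGaussian ν w) :
    μ ∗ ν = Measure.infinitePi fun n => gaussianReal 0 (v n + w n) := by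
  simp_rw [hμ.eq_infinitePi, hν.eq_infinitePi, Measure.infinitePi_conv_infinitePi,
    gaussianReal_conv_gaussianReal, add_zero]

theorem varCutoff_add_varCutoffDiff {d : ℕ} {Λ Λ' : ℝ} (hΛ' : 0 < Λ') (hΛ : Λ' < Λ)
    (n : Fin d → ℤ) : varCutoff Λ' n + varCutoffDiff Λ Λ' n = varCutoff Λ n := by
  have hmono : Real.exp (-latticeNorm n ^ 2 / Λ') ≤ Real.exp (-latticeNorm n ^ 2 / Λ) := by
    rw [Real.exp_le_exp, neg_div, neg_div, neg_le_neg_iff]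
    exact div_le_div_of_nonneg_left (sq_nonneg _) hΛ' hΛ.le
  unfold varCutoff varCutoffDiff
  rw [← Real.toNNReal_add (by positivity) (div_nonneg (sub_nonneg.mpr hmono) (by positivity)),
    ← add_div, add_sub_cancel]

theorem exp_neg_integrateOut {d : ℕ} {ν : Measure ((Fin d → ℤ) → ℝ)} [IsProbabilityMeasure ν]
    {S : ((Fin d → ℤ) → ℝ) → ℝ} (hS : Measurable S) {ψ : (Fin d → ℤ) → ℝ}
    (h0 : ∀ᵐ φ ∂ν, 0 ≤ S (ψ + φ)) :
    Real.exp (-integrateOut ν S ψ) = ∫ φ, Real.exp (-S (ψ + φ)) ∂ν := by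
  simp_rw [integrateOut, neg_neg, add_comm _ ψ]
  exact Real.exp_log (integral_exp_pos
    (integrable_exp_neg_of_ae_nonneg (hS.comp (measurable_const_add ψ)).aestronglyMeasurable h0))

theorem exp_neg_integrateOut_sub {d : ℕ} {ν : Measure ((Fin d → ℤ) → ℝ)}
    [IsProbabilityMeasure ν] {S T : ((Fin d → ℤ) → ℝ) → ℝ} (hS : Measurable S)
    (hT : Measurable T) {ψ : (Fin d → ℤ) → ℝ} (hS0 : ∀ᵐ φ ∂ν, 0 ≤ S (ψ + φ))
    (hT0 : ∀ᵐ φ ∂ν, 0 ≤ T (ψ + φ)) :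
    Real.exp (-integrateOut ν S ψ) - Real.exp (-integrateOut ν T ψ) =
      ∫ φ, (Real.exp (-S (ψ + φ)) - Real.exp (-T (ψ + φ))) ∂ν := by
  rw [exp_neg_integrateOut hS hS0, exp_neg_integrateOut hT hT0, ← integral_sub]
  · exact integrable_exp_neg_of_ae_nonneg
      (hS.comp (measurable_const_add ψ)).aestronglyMeasurable hS0
  · exact integrable_exp_neg_of_ae_nonneg
      (hT.comp (measurable_const_add ψ)).aestronglyMeasurable hT0

theorem exp_integrateOut_lipschitz_general {d : ℕ} {Λ Λ' : ℝ}
    (hΛ' : 0 < Λ') (hΛ : Λ' < Λ)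
    (μΛ μΛ' μΛΛ' : Measure ((Fin d → ℤ) → ℝ))
    (hμΛ : IsProductGaussian μΛ (varCutoff Λ))
    (hμΛ' : IsProductGaussian μΛ' (varCutoff Λ'))
    (hμΛΛ' : IsProductGaussian μΛΛ' (varCutoffDiff Λ Λ'))
    (S T : ((Fin d → ℤ) → ℝ) → ℝ) (hSmeas : Measurable S) (hTmeas : Measurable T)
    (hS2 : Integrable (fun χ => S χ ^ 2) μΛ) (hT2 : Integrable (fun χ => T χ ^ 2) μΛ)
    (hS0 : ∀ᵐ χ ∂μΛ, 0 ≤ S χ) (hT0 : ∀ᵐ χ ∂μΛ, 0 ≤ T χ) :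
    ∫ ψ, (Real.exp (-integrateOut μΛΛ' S ψ) - Real.exp (-integrateOut μΛΛ' T ψ)) ^ 2 ∂μΛ'
      ≤ ∫ χ, (S χ - T χ) ^ 2 ∂μΛ := by
  have := hμΛ'.isProbabilityMeasure
  have := hμΛΛ'.isProbabilityMeasure
  have hconv : μΛ' ∗ μΛΛ' = μΛ := by
    simp_rw [hμΛ'.conv_eq_infinitePi hμΛΛ', varCutoff_add_varCutoffDiff hΛ' hΛ, hμΛ.eq_infinitePi]
  subst hconv
  set u := fun χ => Real.exp (-S χ) - Real.exp (-T χ)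
  have hST : MemLp (S - T) 2 (μΛ' ∗ μΛΛ') :=
    ((memLp_two_iff_integrable_sq hSmeas.aestronglyMeasurable).2 hS2).sub
      ((memLp_two_iff_integrable_sq hTmeas.aestronglyMeasurable).2 hT2)
  have hu_le : ∀ᵐ χ ∂(μΛ' ∗ μΛΛ'), |u χ| ≤ |S χ - T χ| := by
    filter_upwards [hS0, hT0] with χ hSχ hTχ using Real.abs_exp_neg_sub_exp_neg_le hSχ hTχ
  have hu : MemLp u 2 (μΛ' ∗ μΛΛ') :=
    hST.of_le (hSmeas.neg.exp.sub hTmeas.neg.exp).aestronglyMeasurable hu_le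
  have hfiber : ∀ᵐ ψ ∂μΛ', Real.exp (-integrateOut μΛΛ' S ψ) -
      Real.exp (-integrateOut μΛΛ' T ψ) = ∫ φ, u (ψ + φ) ∂μΛΛ' := by
    filter_upwards [ae_ae_add_of_ae_conv hS0, ae_ae_add_of_ae_conv hT0] with ψ hSψ hTψ
      using exp_neg_integrateOut_sub hSmeas hTmeas hSψ hTψ
  calc _ = ∫ ψ, (∫ φ, u (ψ + φ) ∂μΛΛ') ^ 2 ∂μΛ' :=
        integral_congr_ae (hfiber.mono fun ψ h => by rw [h])
    _ ≤ ∫ χ, u χ ^ 2 ∂(μΛ' ∗ μΛΛ') := integral_sq_integral_add_le hu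
    _ ≤ ∫ χ, (S χ - T χ) ^ 2 ∂(μΛ' ∗ μΛΛ') :=
        integral_mono_ae hu.integrable_sq hST.integrable_sq
          (hu_le.mono fun χ h => sq_le_sq.2 h)

/-- For nonnegative square-integrable `S, T`, the exponentials of the integrated-out
actions satisfy `∫ (e^{−I(S)} − e^{−I(T)})² dμ_{Λ'} ≤ ∫ (S − T)² dμ_Λ`. -/
theorem exp_integrateOut_lipschitz {d : ℕ} (hd : 1 ≤ d) {Λ Λ' : ℝ}
    (hΛ' : 0 < Λ') (hΛ : Λ' < Λ)
    (μΛ μΛ' μΛΛ' : Measure ((Fin d → ℤ) → ℝ))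
    (hμΛ : IsProductGaussian μΛ (varCutoff Λ))
    (hμΛ' : IsProductGaussian μΛ' (varCutoff Λ'))
    (hμΛΛ' : IsProductGaussian μΛΛ' (varCutoffDiff Λ Λ'))
    (S T : ((Fin d → ℤ) → ℝ) → ℝ) (hSmeas : Measurable S) (hTmeas : Measurable T)
    (hS2 : Integrable (fun χ => S χ ^ 2) μΛ) (hT2 : Integrable (fun χ => T χ ^ 2) μΛ)
    (hS0 : ∀ᵐ χ ∂μΛ, 0 ≤ S χ) (hT0 : ∀ᵐ χ ∂μΛ, 0 ≤ T χ) :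
    ∫ ψ, (Real.exp (-integrateOut μΛΛ' S ψ) - Real.exp (-integrateOut μΛΛ' T ψ)) ^ 2 ∂μΛ'
      ≤ ∫ χ, (S χ - T χ) ^ 2 ∂μΛ :=
  exp_integrateOut_lipschitz_general hΛ' hΛ μΛ μΛ' μΛΛ' hμΛ hμΛ' hμΛΛ' S T hSmeas hTmeas hS2 hT2 hS0
    hT0
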